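/- arXiv:2002.03400 — 2 statements merged into one kernel-verified Lean document; each statement's English description precedes it below -/
import Mathlib

section
/- (Theorem 5.1, column-wise butterfly error bound.) Fix natural numbers L ≥ 1, lm ≤ L, m₀ ≥ 1, n₀ ≥ 1, a real ε ≥ 0, and a real matrix A of size (2^L·m₀) × (2^L·n₀). For lm ≤ l ≤ L, τ ∈ {0,…,2^l−1}, ν ∈ {0,…,2^{L−l}−1}, let K(l,τ,ν) be the (2^{L−l}·m₀) × (2^l·n₀) block of A with entries K(l,τ,ν)(i,j) = A(τ·2^{L−l}·m₀ + i, ν·2^l·n₀ + j). Suppose given ranks r(l,τ,ν) ∈ ℕ and matrices as follows: (a) for each τ ∈ {0,…,2^L−1}, a matrix U(L,τ,0) of size m₀ × r(L,τ,0) with orthonormal columns such that ‖K(L,τ,0) − U(L,τ,0)·U(L,τ,0)ᵀ·K(L,τ,0)‖_F ≤ ε·‖K(L,τ,0)‖_F; (b) for each l with lm ≤ l < L and each τ ∈ {0,…,2^l−1}, ν ∈ {0,…,2^{L−l}−1}: letting D(l,τ,ν) = diag(U(l+1, 2τ, ⌊ν/2⌋), U(l+1, 2τ+1, ⌊ν/2⌋)),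 a transfer matrix R(l,τ,ν) of size (r(l+1,2τ,⌊ν/2⌋) + r(l+1,2τ+1,⌊ν/2⌋)) × r(l,τ,ν) with orthonormal columns such that ‖D(l,τ,ν)ᵀ·K(l,τ,ν) − R(l,τ,ν)·R(l,τ,ν)ᵀ·D(l,τ,ν)ᵀ·K(l,τ,ν)‖_F ≤ ε·‖D(l,τ,ν)ᵀ·K(l,τ,ν)‖_F, with U(l,τ,ν) defined as D(l,τ,ν)·R(l,τ,ν). Then for every l with lm ≤ l ≤ L: Σ_{τ<2^l} Σ_{ν<2^{L−l}} ‖K(l,τ,ν) − U(l,τ,ν)·U(l,τ,ν)ᵀ·K(l,τ,ν)‖_F² ≤ (L−l+1)·ε²·‖A‖_F². -/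
/-!
For a block `K` at level `l < L`, the basis is `U = diag(U₁, U₂) R` up to a row permutation.
Since `D = diag(U₁, U₂)` has orthonormal columns, Pythagoras splits the residual of `U` into the
residual of `D`, which is the sum of the residuals of the children bases `U₁`, `U₂` on the two
row halves of `K`, and the residual of `R` on the coefficients `Dᵀ K`, which is at most
`ε ‖Dᵀ K‖ ≤ ε ‖K‖`. The row halves of the level-`l` blocks `(τ, ν)` are exactly the column halves
of the level-`(l+1)` blocks `(τ', ⌊ν/2⌋)`, so summing over all blocks gives
`E l ≤ E (l+1) + ε² ‖A‖²` for the total squared residual `E l` at level `l`, while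
`E L ≤ ε² ‖A‖²` by (a). Downward induction on `l` concludes.
-/

open Matrix

/-- Frobenius norm of a real matrix. -/
noncomputable def frobNorm {α β : Type*} [Fintype α] [Fintype β] (A : Matrix α β ℝ) : ℝ :=
  Real.sqrt (∑ i, ∑ j, A i j ^ 2)

/-- Global row index of entry `i` of the `τ`-th row group at level `l`. -/
def rowIdx (L m₀ l τ : ℕ) (hl : l ≤ L) (hτ : τ < 2 ^ l)
    (i : Fin (2 ^ (L - l) * m₀)) : Fin (2 ^ L * m₀) :=
  ⟨τ * (2 ^ (L - l) * m₀) + i.1, by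
    have h1 : τ * (2 ^ (L - l) * m₀) + i.1 < (τ + 1) * (2 ^ (L - l) * m₀) := by
      rw [Nat.succ_mul]
      exact Nat.add_lt_add_left i.2 _
    have h2 : (τ + 1) * (2 ^ (L - l) * m₀) ≤ 2 ^ l * (2 ^ (L - l) * m₀) :=
      Nat.mul_le_mul_right _ hτ
    have h3 : 2 ^ l * (2 ^ (L - l) * m₀) = 2 ^ L * m₀ := by
      rw [← mul_assoc, ← pow_add]
      congr 2
      omega
    exact h1.trans_le (h2.trans_eq h3)⟩

/-- Global column index of entry `j` of the `ν`-th column group at level `l`. -/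
def colIdx (L n₀ l ν : ℕ) (hl : l ≤ L) (hν : ν < 2 ^ (L - l))
    (j : Fin (2 ^ l * n₀)) : Fin (2 ^ L * n₀) :=
  ⟨ν * (2 ^ l * n₀) + j.1, by
    have h1 : ν * (2 ^ l * n₀) + j.1 < (ν + 1) * (2 ^ l * n₀) := by
      rw [Nat.succ_mul]
      exact Nat.add_lt_add_left j.2 _
    have h2 : (ν + 1) * (2 ^ l * n₀) ≤ 2 ^ (L - l) * (2 ^ l * n₀) :=
      Nat.mul_le_mul_right _ hν
    have h3 : 2 ^ (L - l) * (2 ^ l * n₀) = 2 ^ L * n₀ := by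
      rw [← mul_assoc, ← pow_add]
      congr 2
      omega
    exact h1.trans_le (h2.trans_eq h3)⟩

/-- The `(τ,ν)` block of `A` at level `l`. -/
def blockOf {L m₀ n₀ : ℕ} (A : Matrix (Fin (2 ^ L * m₀)) (Fin (2 ^ L * n₀)) ℝ)
    (l τ ν : ℕ) (hl : l ≤ L) (hτ : τ < 2 ^ l) (hν : ν < 2 ^ (L - l)) :
    Matrix (Fin (2 ^ (L - l) * m₀)) (Fin (2 ^ l * n₀)) ℝ :=
  Matrix.of fun i j => A (rowIdx L m₀ l τ hl hτ i) (colIdx L n₀ l ν hl hν j)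

/-- Splitting the rows of a level-`l` block (row-node `τ`) into the rows of its two
level-`(l+1)` children `2τ` and `2τ+1`. -/
def rowSplit (L m₀ l : ℕ) (hl : l < L) :
    Fin (2 ^ (L - l) * m₀) ≃ Fin (2 ^ (L - (l + 1)) * m₀) ⊕ Fin (2 ^ (L - (l + 1)) * m₀) :=
  (finCongr (by
    have h2 : 2 ^ (L - l) = 2 ^ (L - (l + 1)) * 2 := by
      rw [← pow_succ]
      congr 1
      omega
    rw [h2]
    ring)).trans finSumFinEquiv.symm

section Frobenius

variable {m m' n n' : Type*} [Fintype m] [Fintype n]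

lemma frobNorm_sq (M : Matrix m n ℝ) : frobNorm M ^ 2 = ∑ i, ∑ j, M i j ^ 2 :=
  Real.sq_sqrt <| Finset.sum_nonneg fun _ _ => Finset.sum_nonneg fun _ _ => sq_nonneg _

lemma frobNorm_sq_eq_trace (M : Matrix m n ℝ) : frobNorm M ^ 2 = trace (Mᵀ * M) := by
  rw [frobNorm_sq, Finset.sum_comm]
  simp [trace, mul_apply, sq]

lemma frobNorm_sq_add (X Y : Matrix m n ℝ) :
    frobNorm (X + Y) ^ 2 = frobNorm X ^ 2 + 2 * trace (Xᵀ * Y) + frobNorm Y ^ 2 := by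
  have hYX : trace (Yᵀ * X) = trace (Xᵀ * Y) := by
    rw [← trace_transpose, transpose_mul, transpose_transpose]
  simp only [frobNorm_sq_eq_trace, transpose_add, Matrix.add_mul, Matrix.mul_add, trace_add, hYX]
  ring

lemma frobNorm_submatrix_equiv_id [Fintype m'] (M : Matrix m n ℝ) (e : m' ≃ m) :
    frobNorm (M.submatrix e id) = frobNorm M := by
  unfold frobNorm
  exact congrArg Real.sqrt (e.sum_comp fun i => ∑ j, M i j ^ 2)

lemma frobNorm_submatrix_id_equiv [Fintype n'] (M : Matrix m n ℝ) (f : n' ≃ n) :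
    frobNorm (M.submatrix id f) = frobNorm M := by
  unfold frobNorm
  exact congrArg Real.sqrt (Fintype.sum_congr _ _ fun i => f.sum_comp fun j => M i j ^ 2)

lemma frobNorm_sq_fromRows [Fintype m'] (X : Matrix m n ℝ) (Y : Matrix m' n ℝ) :
    frobNorm (fromRows X Y) ^ 2 = frobNorm X ^ 2 + frobNorm Y ^ 2 := by
  simp [frobNorm_sq, Fintype.sum_sum_type]

lemma frobNorm_sq_fromCols [Fintype n'] (X : Matrix m n ℝ) (Y : Matrix m n' ℝ) :
    frobNorm (fromCols X Y) ^ 2 = frobNorm X ^ 2 + frobNorm Y ^ 2 := by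
  simp [frobNorm_sq, Fintype.sum_sum_type, Finset.sum_add_distrib]

lemma frobNorm_nonneg (M : Matrix m n ℝ) : 0 ≤ frobNorm M := Real.sqrt_nonneg _

end Frobenius

def projResidual {m n p : Type*} [Fintype m] [Fintype p] (U : Matrix m p ℝ) (K : Matrix m n ℝ) :
    Matrix m n ℝ :=
  K - U * (Uᵀ * K)

section Projection

variable {m m₁ m₂ n n₁ n₂ p p₁ p₂ q : Type*} [Fintype m] [Fintype p]

lemma transpose_mul_projResidual [DecidableEq p] {U : Matrix m p ℝ} (hU : Uᵀ * U = 1)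
    (K : Matrix m n ℝ) : Uᵀ * projResidual U K = 0 := by
  rw [projResidual, Matrix.mul_sub, ← Matrix.mul_assoc, hU, Matrix.one_mul, sub_self]

/-- Pythagoras: `projResidual U K` is orthogonal to the column space of `U`. -/
lemma frobNorm_sq_sub_mul [Fintype n] [DecidableEq p] {U : Matrix m p ℝ} (hU : Uᵀ * U = 1)
    (K : Matrix m n ℝ) (Y : Matrix p n ℝ) :
    frobNorm (K - U * Y) ^ 2 = frobNorm (projResidual U K) ^ 2 + frobNorm (Uᵀ * K - Y) ^ 2 := by
  have hsplit : K - U * Y = projResidual U K + U * (Uᵀ * K - Y) := by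
    rw [projResidual, Matrix.mul_sub]; abel
  have hcross : trace ((projResidual U K)ᵀ * (U * (Uᵀ * K - Y))) = 0 := by
    rw [← Matrix.mul_assoc, ← transpose_transpose U, ← transpose_mul, transpose_transpose,
      transpose_mul_projResidual hU, transpose_zero, Matrix.zero_mul, trace_zero]
  have hiso : frobNorm (U * (Uᵀ * K - Y)) ^ 2 = frobNorm (Uᵀ * K - Y) ^ 2 := by
    rw [frobNorm_sq_eq_trace, frobNorm_sq_eq_trace, transpose_mul, Matrix.mul_assoc,
      ← Matrix.mul_assoc Uᵀ, hU, Matrix.one_mul]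
  rw [hsplit, frobNorm_sq_add, hcross, hiso]
  ring

lemma frobNorm_sq_transpose_mul_le [Fintype n] [DecidableEq p] {U : Matrix m p ℝ}
    (hU : Uᵀ * U = 1) (K : Matrix m n ℝ) : frobNorm (Uᵀ * K) ^ 2 ≤ frobNorm K ^ 2 := by
  have h := frobNorm_sq_sub_mul hU K 0
  rw [Matrix.mul_zero, sub_zero, sub_zero] at h
  linarith [sq_nonneg (frobNorm (projResidual U K))]

lemma frobNorm_sq_projResidual_mul [Fintype n] [Fintype q] [DecidableEq p] {D : Matrix m p ℝ}
    (hD : Dᵀ * D = 1) (R : Matrix p q ℝ) (K : Matrix m n ℝ) :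
    frobNorm (projResidual (D * R) K) ^ 2 =
      frobNorm (projResidual D K) ^ 2 + frobNorm (projResidual R (Dᵀ * K)) ^ 2 := by
  have h := frobNorm_sq_sub_mul hD K (R * (Rᵀ * (Dᵀ * K)))
  simpa only [projResidual, transpose_mul, Matrix.mul_assoc] using h

lemma projResidual_submatrix_id {U : Matrix m p ℝ} (K : Matrix m n ℝ) (f : q → n) :
    projResidual U (K.submatrix id f) = (projResidual U K).submatrix id f := by
  ext i j
  simp [projResidual, mul_apply]

lemma projResidual_submatrix_equiv {m' : Type*} [Fintype m'] (U : Matrix m p ℝ)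
    (K : Matrix m n ℝ) (e : m' ≃ m) :
    projResidual (U.submatrix e id) (K.submatrix e id) = (projResidual U K).submatrix e id := by
  rw [projResidual, projResidual, transpose_submatrix, submatrix_mul_equiv Uᵀ K id e id,
    submatrix_id_id]
  ext i j
  simp [mul_apply]

lemma projResidual_fromBlocks_fromRows [Fintype m₁] [Fintype m₂] [Fintype p₁] [Fintype p₂]
    (U₁ : Matrix m₁ p₁ ℝ) (U₂ : Matrix m₂ p₂ ℝ) (K₁ : Matrix m₁ n ℝ) (K₂ : Matrix m₂ n ℝ) :
    projResidual (fromBlocks U₁ 0 0 U₂) (fromRows K₁ K₂) =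
      fromRows (projResidual U₁ K₁) (projResidual U₂ K₂) := by
  ext (i | i) j <;> simp [projResidual, fromBlocks_transpose, fromBlocks_mul_fromRows]

lemma projResidual_fromCols (U : Matrix m p ℝ)
    (K₁ : Matrix m n₁ ℝ) (K₂ : Matrix m n₂ ℝ) :
    projResidual U (fromCols K₁ K₂) = fromCols (projResidual U K₁) (projResidual U K₂) := by
  ext i (j | j) <;> simp [projResidual, mul_fromCols]

lemma fromBlocks_transpose_mul_self [Fintype m₁] [Fintype m₂] [Fintype p₁] [Fintype p₂]
    [DecidableEq p₁] [DecidableEq p₂] {U₁ : Matrix m₁ p₁ ℝ} {U₂ : Matrix m₂ p₂ ℝ}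
    (h₁ : U₁ᵀ * U₁ = 1) (h₂ : U₂ᵀ * U₂ = 1) :
    (fromBlocks U₁ 0 0 U₂)ᵀ * fromBlocks U₁ 0 0 U₂ = 1 := by
  simp [fromBlocks_transpose, fromBlocks_multiply, h₁, h₂, fromBlocks_one]

lemma frobNorm_sq_projResidual_fromBlocks_mul_le [Fintype n] [Fintype m₁] [Fintype m₂]
    [Fintype p₁] [Fintype p₂] [Fintype q] [DecidableEq p₁] [DecidableEq p₂]
    {U₁ : Matrix m₁ p₁ ℝ} {U₂ : Matrix m₂ p₂ ℝ} (h₁ : U₁ᵀ * U₁ = 1) (h₂ : U₂ᵀ * U₂ = 1)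
    (R : Matrix (p₁ ⊕ p₂) q ℝ) (K₁ : Matrix m₁ n ℝ) (K₂ : Matrix m₂ n ℝ) {ε : ℝ}
    (hR : frobNorm (projResidual R ((fromBlocks U₁ 0 0 U₂)ᵀ * fromRows K₁ K₂)) ≤
      ε * frobNorm ((fromBlocks U₁ 0 0 U₂)ᵀ * fromRows K₁ K₂)) :
    frobNorm (projResidual (fromBlocks U₁ 0 0 U₂ * R) (fromRows K₁ K₂)) ^ 2 ≤
      frobNorm (projResidual U₁ K₁) ^ 2 + frobNorm (projResidual U₂ K₂) ^ 2 +
        ε ^ 2 * frobNorm (fromRows K₁ K₂) ^ 2 := by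
  have hD := fromBlocks_transpose_mul_self h₁ h₂
  have hRsq : frobNorm (projResidual R ((fromBlocks U₁ 0 0 U₂)ᵀ * fromRows K₁ K₂)) ^ 2 ≤
      ε ^ 2 * frobNorm ((fromBlocks U₁ 0 0 U₂)ᵀ * fromRows K₁ K₂) ^ 2 := by
    rw [← mul_pow]
    exact pow_le_pow_left₀ (frobNorm_nonneg _) hR 2
  rw [frobNorm_sq_projResidual_mul hD, projResidual_fromBlocks_fromRows, frobNorm_sq_fromRows]
  grw [hRsq, frobNorm_sq_transpose_mul_le hD]

end Projection

lemma Fin.sum_univ_eq_sum_pairs {M : Type*} [AddCommMonoid M] {N n : ℕ} (hN : N = 2 * n)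
    (f : Fin N → M) :
    ∑ i, f i = ∑ i : Fin n, (f ⟨2 * i, by omega⟩ + f ⟨2 * i + 1, by omega⟩) := by
  subst hN
  rw [← (finProdFinEquiv.trans (finCongr (Nat.mul_comm n 2))).sum_comp, Fintype.sum_prod_type]
  refine Fintype.sum_congr _ _ fun i => ?_
  rw [Fin.sum_univ_two]
  congr 1 <;> congr 1 <;> ext <;> simp [add_comm]

section Butterfly

variable {L m₀ n₀ : ℕ}

lemma two_mul_lt_two_pow_succ {τ l : ℕ} (hτ : τ < 2 ^ l) : 2 * τ < 2 ^ (l + 1) := by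
  rw [pow_succ]; omega

lemma two_mul_add_one_lt_two_pow_succ {τ l : ℕ} (hτ : τ < 2 ^ l) : 2 * τ + 1 < 2 ^ (l + 1) := by
  rw [pow_succ]; omega

lemma two_pow_sub_eq_two_mul {l : ℕ} (hl : l < L) : 2 ^ (L - l) = 2 * 2 ^ (L - (l + 1)) := by
  rw [← pow_succ']; congr 1; omega

lemma div_two_lt_two_pow_sub_succ {l ν : ℕ} (hl : l < L) (hν : ν < 2 ^ (L - l)) :
    ν / 2 < 2 ^ (L - (l + 1)) := by
  rw [two_pow_sub_eq_two_mul hl] at hν; omega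

/-- Splitting the columns of a level-`(l+1)` block (column-node `μ`) into the columns of the
level-`l` column-nodes `2μ` and `2μ+1`. -/
def colSplit (n₀ l : ℕ) : Fin (2 ^ (l + 1) * n₀) ≃ Fin (2 ^ l * n₀) ⊕ Fin (2 ^ l * n₀) :=
  (finCongr (by ring)).trans finSumFinEquiv.symm

/-- The rows of row-node `τ'` at level `l+1` and the columns of column-node `ν` at level `l`: a
row half of the level-`l` block `(⌊τ'/2⌋, ν)` and a column half of the level-`(l+1)` block
`(τ', ⌊ν/2⌋)`. -/
def halfBlock (A : Matrix (Fin (2 ^ L * m₀)) (Fin (2 ^ L * n₀)) ℝ) (l τ' ν : ℕ) (hl : l < L)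
    (hτ' : τ' < 2 ^ (l + 1)) (hν : ν < 2 ^ (L - l)) :
    Matrix (Fin (2 ^ (L - (l + 1)) * m₀)) (Fin (2 ^ l * n₀)) ℝ :=
  Matrix.of fun i j => A (rowIdx L m₀ (l + 1) τ' hl hτ' i) (colIdx L n₀ l ν hl.le hν j)

variable (A : Matrix (Fin (2 ^ L * m₀)) (Fin (2 ^ L * n₀)) ℝ)

lemma blockOf_submatrix_rowSplit_symm {l τ ν : ℕ} (hl : l < L) (hτ : τ < 2 ^ l)
    (hν : ν < 2 ^ (L - l)) :
    (blockOf A l τ ν hl.le hτ hν).submatrix (rowSplit L m₀ l hl).symm id =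
      fromRows (halfBlock A l (2 * τ) ν hl (two_mul_lt_two_pow_succ hτ) hν)
        (halfBlock A l (2 * τ + 1) ν hl (two_mul_add_one_lt_two_pow_succ hτ) hν) := by
  have h := two_pow_sub_eq_two_mul hl
  ext (i | i) j <;>
  · simp only [submatrix_apply, fromRows_apply_inl, fromRows_apply_inr, blockOf, halfBlock,
      of_apply, id]
    congr 1
    ext
    simp [rowIdx, rowSplit, h]
    ring

lemma blockOf_submatrix_colSplit_symm {l τ' μ : ℕ} (hl : l < L) (hτ' : τ' < 2 ^ (l + 1))
    (hμ : μ < 2 ^ (L - (l + 1))) :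
    (blockOf A (l + 1) τ' μ hl hτ' hμ).submatrix id (colSplit n₀ l).symm =
      fromCols (halfBlock A l τ' (2 * μ) hl hτ' (by rw [two_pow_sub_eq_two_mul hl]; omega))
        (halfBlock A l τ' (2 * μ + 1) hl hτ' (by rw [two_pow_sub_eq_two_mul hl]; omega)) := by
  ext i (j | j) <;>
  · simp only [submatrix_apply, fromCols_apply_inl, fromCols_apply_inr, blockOf, halfBlock,
      of_apply, id]
    congr 1
    ext
    simp [colIdx, colSplit, pow_succ]
    ring

lemma sum_frobNorm_sq_blockOf {l : ℕ} (hl : l ≤ L) :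
    ∑ τ : Fin (2 ^ l), ∑ ν : Fin (2 ^ (L - l)), frobNorm (blockOf A l τ ν hl τ.2 ν.2) ^ 2 =
      frobNorm A ^ 2 := by
  have hrow : 2 ^ l * (2 ^ (L - l) * m₀) = 2 ^ L * m₀ := by
    rw [← mul_assoc, ← pow_add, Nat.add_sub_cancel' hl]
  have hcol : 2 ^ (L - l) * (2 ^ l * n₀) = 2 ^ L * n₀ := by
    rw [← mul_assoc, ← pow_add, Nat.sub_add_cancel hl]
  rw [frobNorm_sq, ← (finProdFinEquiv.trans (finCongr hrow)).sum_comp, Fintype.sum_prod_type]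
  refine Fintype.sum_congr _ _ fun τ => ?_
  simp_rw [← (finProdFinEquiv.trans (finCongr hcol)).sum_comp, Fintype.sum_prod_type]
  rw [Finset.sum_comm]
  refine Fintype.sum_congr _ _ fun ν => ?_
  rw [frobNorm_sq]
  refine Fintype.sum_congr _ _ fun i => Fintype.sum_congr _ _ fun j => ?_
  simp only [blockOf, of_apply]
  congr 2 <;> ext <;> simp [rowIdx, colIdx] <;> ring

end Butterfly

section NestedBasis

variable {L m₀ n₀ : ℕ} (A : Matrix (Fin (2 ^ L * m₀)) (Fin (2 ^ L * n₀)) ℝ)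

lemma frobNorm_sq_projResidual_halfBlock_add {p : Type*} [Fintype p] {l τ' μ : ℕ}
    (V : Matrix (Fin (2 ^ (L - (l + 1)) * m₀)) p ℝ) (hl : l < L)
    (hτ' : τ' < 2 ^ (l + 1)) (hμ : μ < 2 ^ (L - (l + 1))) :
    frobNorm (projResidual V
        (halfBlock A l τ' (2 * μ) hl hτ' (by rw [two_pow_sub_eq_two_mul hl]; omega))) ^ 2 +
      frobNorm (projResidual V
        (halfBlock A l τ' (2 * μ + 1) hl hτ' (by rw [two_pow_sub_eq_two_mul hl]; omega))) ^ 2 =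
      frobNorm (projResidual V (blockOf A (l + 1) τ' μ hl hτ' hμ)) ^ 2 := by
  rw [← frobNorm_sq_fromCols, ← projResidual_fromCols, ← blockOf_submatrix_colSplit_symm,
    projResidual_submatrix_id, frobNorm_submatrix_id_equiv]

variable {r : ℕ → ℕ → ℕ → ℕ}
  (U : (l τ ν : ℕ) → Matrix (Fin (2 ^ (L - l) * m₀)) (Fin (r l τ ν)) ℝ)

noncomputable def levelResidualSq (l : ℕ) (hl : l ≤ L) : ℝ :=
  ∑ τ : Fin (2 ^ l), ∑ ν : Fin (2 ^ (L - l)),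
    frobNorm (projResidual (U l τ ν) (blockOf A l τ ν hl τ.2 ν.2)) ^ 2

lemma sum_frobNorm_sq_projResidual_halfBlock {l : ℕ} (hl : l < L) :
    ∑ τ : Fin (2 ^ l), ∑ ν : Fin (2 ^ (L - l)),
      (frobNorm (projResidual (U (l + 1) (2 * τ) (ν / 2))
          (halfBlock A l (2 * τ) ν hl (two_mul_lt_two_pow_succ τ.2) ν.2)) ^ 2 +
        frobNorm (projResidual (U (l + 1) (2 * τ + 1) (ν / 2))
          (halfBlock A l (2 * τ + 1) ν hl (two_mul_add_one_lt_two_pow_succ τ.2) ν.2)) ^ 2) =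
      levelResidualSq A U (l + 1) hl := by
  have hcols : ∀ τ' : Fin (2 ^ (l + 1)),
      ∑ μ : Fin (2 ^ (L - (l + 1))),
        frobNorm (projResidual (U (l + 1) τ' μ) (blockOf A (l + 1) τ' μ hl τ'.2 μ.2)) ^ 2 =
      ∑ ν : Fin (2 ^ (L - l)), frobNorm (projResidual (U (l + 1) τ' (ν / 2))
        (halfBlock A l τ' ν hl τ'.2 ν.2)) ^ 2 := fun τ' => by
    rw [Fin.sum_univ_eq_sum_pairs (two_pow_sub_eq_two_mul hl)]
    refine Fintype.sum_congr _ _ fun μ => ?_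
    have hμ₀ : 2 * μ.1 / 2 = μ := by omega
    have hμ₁ : (2 * μ.1 + 1) / 2 = μ := by omega
    dsimp only
    rw [hμ₀, hμ₁]
    exact (frobNorm_sq_projResidual_halfBlock_add A (U (l + 1) τ' μ) hl τ'.2 μ.2).symm
  rw [levelResidualSq, Fintype.sum_congr _ _ hcols, Fin.sum_univ_eq_sum_pairs (pow_succ' 2 l)]
  simp only [Finset.sum_add_distrib]

/-- Hypothesis (b) of the theorem at the node `(l, τ, ν)`, with transfer matrix `R`. -/
def IsNestedBasisAt (ε : ℝ) {l τ ν : ℕ}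
    (R : Matrix (Fin (r (l + 1) (2 * τ) (ν / 2)) ⊕ Fin (r (l + 1) (2 * τ + 1) (ν / 2)))
      (Fin (r l τ ν)) ℝ)
    (hl : l < L) (hτ : τ < 2 ^ l) (hν : ν < 2 ^ (L - l)) : Prop :=
  let D := fromBlocks (U (l + 1) (2 * τ) (ν / 2)) 0 0 (U (l + 1) (2 * τ + 1) (ν / 2))
  let K' := (blockOf A l τ ν hl.le hτ hν).submatrix (rowSplit L m₀ l hl).symm id
  Rᵀ * R = 1 ∧ frobNorm (projResidual R (Dᵀ * K')) ≤ ε * frobNorm (Dᵀ * K') ∧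
    U l τ ν = (D * R).submatrix (rowSplit L m₀ l hl) id

variable {A U}

namespace IsNestedBasisAt

variable {ε : ℝ} {l τ ν : ℕ}
  {R : Matrix (Fin (r (l + 1) (2 * τ) (ν / 2)) ⊕ Fin (r (l + 1) (2 * τ + 1) (ν / 2)))
      (Fin (r l τ ν)) ℝ}
  {hl : l < L} {hτ : τ < 2 ^ l} {hν : ν < 2 ^ (L - l)}

lemma transpose_mul_self (h : IsNestedBasisAt A U ε R hl hτ hν)
    (h₁ : (U (l + 1) (2 * τ) (ν / 2))ᵀ * U (l + 1) (2 * τ) (ν / 2) = 1)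
    (h₂ : (U (l + 1) (2 * τ + 1) (ν / 2))ᵀ * U (l + 1) (2 * τ + 1) (ν / 2) = 1) :
    (U l τ ν)ᵀ * U l τ ν = 1 := by
  obtain ⟨hR, -, hU⟩ := h
  rw [hU, transpose_submatrix, submatrix_mul_equiv, submatrix_id_id, transpose_mul,
    Matrix.mul_assoc, ← Matrix.mul_assoc _ _ R, fromBlocks_transpose_mul_self h₁ h₂,
    Matrix.one_mul, hR]

lemma frobNorm_sq_projResidual_le (h : IsNestedBasisAt A U ε R hl hτ hν)
    (h₁ : (U (l + 1) (2 * τ) (ν / 2))ᵀ * U (l + 1) (2 * τ) (ν / 2) = 1)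
    (h₂ : (U (l + 1) (2 * τ + 1) (ν / 2))ᵀ * U (l + 1) (2 * τ + 1) (ν / 2) = 1) :
    frobNorm (projResidual (U l τ ν) (blockOf A l τ ν hl.le hτ hν)) ^ 2 ≤
      frobNorm (projResidual (U (l + 1) (2 * τ) (ν / 2))
          (halfBlock A l (2 * τ) ν hl (two_mul_lt_two_pow_succ hτ) hν)) ^ 2 +
        frobNorm (projResidual (U (l + 1) (2 * τ + 1) (ν / 2))
          (halfBlock A l (2 * τ + 1) ν hl (two_mul_add_one_lt_two_pow_succ hτ) hν)) ^ 2 +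
        ε ^ 2 * frobNorm (blockOf A l τ ν hl.le hτ hν) ^ 2 := by
  obtain ⟨-, hR, hU⟩ := h
  set e := rowSplit L m₀ l hl
  have hK : blockOf A l τ ν hl.le hτ hν =
      ((blockOf A l τ ν hl.le hτ hν).submatrix e.symm id).submatrix e id := by
    simp
  rw [blockOf_submatrix_rowSplit_symm] at hR hK
  rw [hU, hK, projResidual_submatrix_equiv, frobNorm_submatrix_equiv_id,
    frobNorm_submatrix_equiv_id]
  exact frobNorm_sq_projResidual_fromBlocks_mul_le h₁ h₂ R _ _ hR

end IsNestedBasisAt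

end NestedBasis

section Levels

variable {L m₀ n₀ : ℕ} {A : Matrix (Fin (2 ^ L * m₀)) (Fin (2 ^ L * n₀)) ℝ}
  {r : ℕ → ℕ → ℕ → ℕ} {U : (l τ ν : ℕ) → Matrix (Fin (2 ^ (L - l) * m₀)) (Fin (r l τ ν)) ℝ}
  {ε : ℝ}

lemma transpose_mul_self_of_isNestedBasisAt {lm : ℕ}
    (hleaf : ∀ τ < 2 ^ L, (U L τ 0)ᵀ * U L τ 0 = 1)
    (hnode : ∀ l τ ν (_ : lm ≤ l) (hl : l < L) (hτ : τ < 2 ^ l) (hν : ν < 2 ^ (L - l)),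
      ∃ R, IsNestedBasisAt A U ε R hl hτ hν)
    {l : ℕ} (hlm : lm ≤ l) (hl : l ≤ L) :
    ∀ τ ν, τ < 2 ^ l → ν < 2 ^ (L - l) → (U l τ ν)ᵀ * U l τ ν = 1 := by
  induction hl using Nat.decreasingInduction with
  | self =>
    intro τ ν hτ hν
    obtain rfl : ν = 0 := by simpa using hν
    exact hleaf τ hτ
  | of_succ k hk ih =>
    intro τ ν hτ hν
    obtain ⟨R, hR⟩ := hnode k τ ν hlm hk hτ hν
    have hU := ih (hlm.trans k.le_succ)
    exact hR.transpose_mul_self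
      (hU _ _ (two_mul_lt_two_pow_succ hτ) (div_two_lt_two_pow_sub_succ hk hν))
      (hU _ _ (two_mul_add_one_lt_two_pow_succ hτ) (div_two_lt_two_pow_sub_succ hk hν))

lemma levelResidualSq_leaf_le
    (hleaf : ∀ τ (hτ : τ < 2 ^ L),
      frobNorm (projResidual (U L τ 0) (blockOf A L τ 0 le_rfl hτ (Nat.two_pow_pos _))) ≤
        ε * frobNorm (blockOf A L τ 0 le_rfl hτ (Nat.two_pow_pos _))) :
    levelResidualSq A U L le_rfl ≤ ε ^ 2 * frobNorm A ^ 2 := by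
  rw [← sum_frobNorm_sq_blockOf A le_rfl, Finset.mul_sum]
  refine Finset.sum_le_sum fun τ _ => ?_
  rw [Finset.mul_sum]
  refine Finset.sum_le_sum fun ⟨ν, hν⟩ _ => ?_
  obtain rfl : ν = 0 := by simpa using hν
  rw [← mul_pow]
  exact pow_le_pow_left₀ (frobNorm_nonneg _) (hleaf τ τ.2) 2

lemma levelResidualSq_le_succ {l : ℕ} (hl : l < L)
    (horth : ∀ τ' μ, τ' < 2 ^ (l + 1) → μ < 2 ^ (L - (l + 1)) →
      (U (l + 1) τ' μ)ᵀ * U (l + 1) τ' μ = 1)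
    (hnode : ∀ τ ν (hτ : τ < 2 ^ l) (hν : ν < 2 ^ (L - l)),
      ∃ R, IsNestedBasisAt A U ε R hl hτ hν) :
    levelResidualSq A U l hl.le ≤ levelResidualSq A U (l + 1) hl + ε ^ 2 * frobNorm A ^ 2 := by
  rw [← sum_frobNorm_sq_projResidual_halfBlock A U hl, ← sum_frobNorm_sq_blockOf A hl.le,
    Finset.mul_sum, ← Finset.sum_add_distrib]
  refine Finset.sum_le_sum fun τ _ => ?_
  rw [Finset.mul_sum, ← Finset.sum_add_distrib]
  refine Finset.sum_le_sum fun ν _ => ?_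
  obtain ⟨R, hR⟩ := hnode τ ν τ.2 ν.2
  have hν := div_two_lt_two_pow_sub_succ hl ν.2
  exact hR.frobNorm_sq_projResidual_le (horth _ _ (two_mul_lt_two_pow_succ τ.2) hν)
    (horth _ _ (two_mul_add_one_lt_two_pow_succ τ.2) hν)

end Levels

theorem columnwise_butterfly_error_bound_general {L lm m₀ n₀ : ℕ}
    (ε : ℝ)
    (A : Matrix (Fin (2 ^ L * m₀)) (Fin (2 ^ L * n₀)) ℝ)
    (r : ℕ → ℕ → ℕ → ℕ)
    (U : (l : ℕ) → (τ : ℕ) → (ν : ℕ) → Matrix (Fin (2 ^ (L - l) * m₀)) (Fin (r l τ ν)) ℝ)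
    (R : (l : ℕ) → (τ : ℕ) → (ν : ℕ) →
      Matrix (Fin (r (l + 1) (2 * τ) (ν / 2)) ⊕ Fin (r (l + 1) (2 * τ + 1) (ν / 2)))
        (Fin (r l τ ν)) ℝ)
    -- (a) leaf-level bases are orthonormal and compress the leaf blocks with
    -- relative accuracy ε
    (hleaf : ∀ τ (hτ : τ < 2 ^ L),
      (U L τ 0)ᵀ * U L τ 0 = 1 ∧
      frobNorm (blockOf A L τ 0 le_rfl hτ (Nat.two_pow_pos _) -
          U L τ 0 * ((U L τ 0)ᵀ * blockOf A L τ 0 le_rfl hτ (Nat.two_pow_pos _))) ≤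
        ε * frobNorm (blockOf A L τ 0 le_rfl hτ (Nat.two_pow_pos _)))
    -- (b) the transfer matrices are orthonormal, compress the intermediate
    -- matrices with relative accuracy ε, and define the nested bases U = D·R
    (hrec : ∀ l τ ν (hl : lm ≤ l) (hl' : l < L) (hτ : τ < 2 ^ l) (hν : ν < 2 ^ (L - l)),
      let D := Matrix.fromBlocks
        (U (l + 1) (2 * τ) (ν / 2)) 0 0 (U (l + 1) (2 * τ + 1) (ν / 2));
      let K' := (blockOf A l τ ν hl'.le hτ hν).submatrix (⇑(rowSplit L m₀ l hl').symm) id;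
      (R l τ ν)ᵀ * R l τ ν = 1 ∧
      frobNorm (Dᵀ * K' - R l τ ν * ((R l τ ν)ᵀ * (Dᵀ * K'))) ≤ ε * frobNorm (Dᵀ * K') ∧
      U l τ ν = (D * R l τ ν).submatrix (⇑(rowSplit L m₀ l hl')) id) :
    ∀ l (hl : lm ≤ l) (hl' : l ≤ L),
      ∑ τ : Fin (2 ^ l), ∑ ν : Fin (2 ^ (L - l)),
        frobNorm (blockOf A l τ.1 ν.1 hl' τ.2 ν.2 -
          U l τ.1 ν.1 * ((U l τ.1 ν.1)ᵀ * blockOf A l τ.1 ν.1 hl' τ.2 ν.2)) ^ 2 ≤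
      ((L - l + 1 : ℕ) : ℝ) * ε ^ 2 * frobNorm A ^ 2 := by
  have hnode : ∀ l τ ν (_ : lm ≤ l) (hl : l < L) (hτ : τ < 2 ^ l) (hν : ν < 2 ^ (L - l)),
      ∃ R, IsNestedBasisAt A U ε R hl hτ hν :=
    fun l τ ν hlm hl hτ hν => ⟨R l τ ν, hrec l τ ν hlm hl hτ hν⟩
  intro l hlm hl
  change levelResidualSq A U l hl ≤ _
  induction hl using Nat.decreasingInduction with
  | self => simpa using levelResidualSq_leaf_le fun τ hτ => (hleaf τ hτ).2
  | of_succ k hk ih =>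
    have horth := transpose_mul_self_of_isNestedBasisAt (fun τ hτ => (hleaf τ hτ).1) hnode
      (hlm.trans k.le_succ) hk
    have hstep := levelResidualSq_le_succ hk horth (hnode k · · hlm hk)
    have hcoef : ((L - k + 1 : ℕ) : ℝ) = ((L - (k + 1) + 1 : ℕ) : ℝ) + 1 := by
      norm_cast; omega
    rw [hcoef]
    linarith [ih (hlm.trans k.le_succ)]

/-- **Theorem 5.1 (column-wise butterfly error bound).** -/
theorem columnwise_butterfly_error_bound {L lm m₀ n₀ : ℕ}
    (hL : 1 ≤ L) (hlm : lm ≤ L) (hm : 1 ≤ m₀) (hn : 1 ≤ n₀)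
    (ε : ℝ) (hε : 0 ≤ ε)
    (A : Matrix (Fin (2 ^ L * m₀)) (Fin (2 ^ L * n₀)) ℝ)
    (r : ℕ → ℕ → ℕ → ℕ)
    (U : (l : ℕ) → (τ : ℕ) → (ν : ℕ) → Matrix (Fin (2 ^ (L - l) * m₀)) (Fin (r l τ ν)) ℝ)
    (R : (l : ℕ) → (τ : ℕ) → (ν : ℕ) →
      Matrix (Fin (r (l + 1) (2 * τ) (ν / 2)) ⊕ Fin (r (l + 1) (2 * τ + 1) (ν / 2)))
        (Fin (r l τ ν)) ℝ)
    -- (a) leaf-level bases are orthonormal and compress the leaf blocks with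
    -- relative accuracy ε
    (hleaf : ∀ τ (hτ : τ < 2 ^ L),
      (U L τ 0)ᵀ * U L τ 0 = 1 ∧
      frobNorm (blockOf A L τ 0 le_rfl hτ (Nat.two_pow_pos _) -
          U L τ 0 * ((U L τ 0)ᵀ * blockOf A L τ 0 le_rfl hτ (Nat.two_pow_pos _))) ≤
        ε * frobNorm (blockOf A L τ 0 le_rfl hτ (Nat.two_pow_pos _)))
    -- (b) the transfer matrices are orthonormal, compress the intermediate
    -- matrices with relative accuracy ε, and define the nested bases U = D·R
    (hrec : ∀ l τ ν (hl : lm ≤ l) (hl' : l < L) (hτ : τ < 2 ^ l) (hν : ν < 2 ^ (L - l)),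
      let D := Matrix.fromBlocks
        (U (l + 1) (2 * τ) (ν / 2)) 0 0 (U (l + 1) (2 * τ + 1) (ν / 2));
      let K' := (blockOf A l τ ν hl'.le hτ hν).submatrix (⇑(rowSplit L m₀ l hl').symm) id;
      (R l τ ν)ᵀ * R l τ ν = 1 ∧
      frobNorm (Dᵀ * K' - R l τ ν * ((R l τ ν)ᵀ * (Dᵀ * K'))) ≤ ε * frobNorm (Dᵀ * K') ∧
      U l τ ν = (D * R l τ ν).submatrix (⇑(rowSplit L m₀ l hl')) id) :
    ∀ l (hl : lm ≤ l) (hl' : l ≤ L),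
      ∑ τ : Fin (2 ^ l), ∑ ν : Fin (2 ^ (L - l)),
        frobNorm (blockOf A l τ.1 ν.1 hl' τ.2 ν.2 -
          U l τ.1 ν.1 * ((U l τ.1 ν.1)ᵀ * blockOf A l τ.1 ν.1 hl' τ.2 ν.2)) ^ 2 ≤
      ((L - l + 1 : ℕ) : ℝ) * ε ^ 2 * frobNorm A ^ 2 :=
  columnwise_butterfly_error_bound_general ε A r U R hleaf hrec
end

section
/- (Theorem 5.3, hybrid butterfly error bound, stated over an arbitrary family of blocks.) Let ι be a finite index set, and for each b ∈ ι let K_b be a real m_b × n_b matrix, U_b a real m_b × r_b matrix with orthonormal columns, and V_b a real n_b × s_b matrix with orthonormal columns. Let L, lm be natural numbers with lm ≤ L, let ε ≥ 0 and c ≥ 0 (here c = ‖K(T,S)‖_F² in the paper). If Σ_{b∈ι} ‖K_b − U_b·U_bᵀ·K_b‖_F² ≤ (L − lm + 1)·ε²·c and Σ_{b∈ι} ‖K_b − K_b·V_b·V_bᵀ‖_F² ≤ (lm + 1)·ε²·c, then Σ_{b∈ι} ‖K_b − U_b·U_bᵀ·K_b·V_b·V_bᵀ‖_F² ≤ (L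 + 2)·ε²·c. -/
/-! Write `P = U Uᵀ`, the orthogonal projection onto the column space of `U`. Then
`K - P K W = (K - P K) + P (K - K W)`, and the two summands are orthogonal in the trace inner
product, so by Pythagoras and `‖P N‖_F ≤ ‖N‖_F` the blockwise error is at most the sum of the
column and row errors. This holds for any `W`; summing over blocks adds the two budgets,
`(L - lm + 1) + (lm + 1) = L + 2`. -/

open Matrix

section Frobenius

variable {α β γ : Type*} [Fintype α]

lemma frobNorm_nonneg_s9 [Fintype β] (A : Matrix α β ℝ) : 0 ≤ frobNorm A := Real.sqrt_nonneg _

lemma frobNorm_sq_s9 [Fintype β] (A : Matrix α β ℝ) : frobNorm A ^ 2 = trace (Aᵀ * A) := by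
  rw [frobNorm, Real.sq_sqrt (by positivity)]
  simp only [trace, diag, mul_apply, transpose_apply, sq]
  exact Finset.sum_comm

lemma frobNorm_add_sq_of_transpose_mul_eq_zero [Fintype β] {A B : Matrix α β ℝ}
    (h : Aᵀ * B = 0) :
    frobNorm (A + B) ^ 2 = frobNorm A ^ 2 + frobNorm B ^ 2 := by
  have h' : Bᵀ * A = 0 := by simpa [transpose_mul] using congrArg transpose h
  rw [frobNorm_sq_s9, frobNorm_sq_s9, frobNorm_sq_s9, transpose_add, Matrix.add_mul, Matrix.mul_add,
    Matrix.mul_add, h, h', trace_add, trace_add, trace_add, trace_zero]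
  ring

variable {P : Matrix α α ℝ}

lemma transpose_sub_mul_mul_eq_zero (hPs : P.IsSymm) (hPi : IsIdempotentElem P)
    (X : Matrix α β ℝ) (Y : Matrix α γ ℝ) : (X - P * X)ᵀ * (P * Y) = 0 := by
  rw [transpose_sub, Matrix.sub_mul, transpose_mul, hPs.eq, Matrix.mul_assoc,
    ← Matrix.mul_assoc P P, hPi.eq, sub_self]

lemma frobNorm_mul_le_of_isSymm_of_isIdempotentElem [Fintype β] (hPs : P.IsSymm)
    (hPi : IsIdempotentElem P) (N : Matrix α β ℝ) : frobNorm (P * N) ≤ frobNorm N := by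
  have hsplit := frobNorm_add_sq_of_transpose_mul_eq_zero
    (transpose_sub_mul_mul_eq_zero hPs hPi N N)
  rw [sub_add_cancel] at hsplit
  refine (pow_le_pow_iff_left₀ (frobNorm_nonneg_s9 _) (frobNorm_nonneg_s9 _) two_ne_zero).1 ?_
  linarith [sq_nonneg (frobNorm (N - P * N))]

lemma frobNorm_sub_mul_mul_sq_le [Fintype β] (hPs : P.IsSymm) (hPi : IsIdempotentElem P)
    (K : Matrix α β ℝ) (W : Matrix β β ℝ) :
    frobNorm (K - P * K * W) ^ 2 ≤ frobNorm (K - P * K) ^ 2 + frobNorm (K - K * W) ^ 2 := by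
  have hdecomp : K - P * K * W = (K - P * K) + P * (K - K * W) := by
    rw [Matrix.mul_sub, Matrix.mul_assoc]; abel
  rw [hdecomp, frobNorm_add_sq_of_transpose_mul_eq_zero (transpose_sub_mul_mul_eq_zero hPs hPi _ _)]
  gcongr
  · exact frobNorm_nonneg_s9 _
  · exact frobNorm_mul_le_of_isSymm_of_isIdempotentElem hPs hPi _

end Frobenius

section Orthonormal

variable {α β : Type*} [Fintype β]

lemma isSymm_mul_transpose (U : Matrix α β ℝ) : (U * Uᵀ).IsSymm := by
  rw [IsSymm, transpose_mul, transpose_transpose]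

lemma isIdempotentElem_mul_transpose_of_transpose_mul_eq_one [Fintype α] [DecidableEq β]
    {U : Matrix α β ℝ} (hU : Uᵀ * U = 1) :
    IsIdempotentElem (U * Uᵀ) := by
  rw [IsIdempotentElem, Matrix.mul_assoc, ← Matrix.mul_assoc Uᵀ, hU, Matrix.one_mul]

end Orthonormal

theorem hybrid_butterfly_error_bound_general {ι : Type*} [Fintype ι]
    (m n r s : ι → ℕ)
    (K : ∀ b, Matrix (Fin (m b)) (Fin (n b)) ℝ)
    (U : ∀ b, Matrix (Fin (m b)) (Fin (r b)) ℝ)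
    (V : ∀ b, Matrix (Fin (n b)) (Fin (s b)) ℝ)
    (hU : ∀ b, (U b)ᵀ * U b = 1)
    (L lm : ℕ) (hlm : lm ≤ L) (ε c : ℝ)
    (hcol : ∑ b, frobNorm (K b - U b * (U b)ᵀ * K b) ^ 2 ≤
      ((L - lm + 1 : ℕ) : ℝ) * ε ^ 2 * c)
    (hrow : ∑ b, frobNorm (K b - K b * V b * (V b)ᵀ) ^ 2 ≤
      ((lm + 1 : ℕ) : ℝ) * ε ^ 2 * c) :
    ∑ b, frobNorm (K b - U b * (U b)ᵀ * K b * V b * (V b)ᵀ) ^ 2 ≤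
      ((L + 2 : ℕ) : ℝ) * ε ^ 2 * c := by
  have hblock : ∀ b, frobNorm (K b - U b * (U b)ᵀ * K b * V b * (V b)ᵀ) ^ 2 ≤
      frobNorm (K b - U b * (U b)ᵀ * K b) ^ 2 + frobNorm (K b - K b * V b * (V b)ᵀ) ^ 2 := by
    intro b
    simpa only [Matrix.mul_assoc] using frobNorm_sub_mul_mul_sq_le (isSymm_mul_transpose (U b))
      (isIdempotentElem_mul_transpose_of_transpose_mul_eq_one (hU b)) (K b) (V b * (V b)ᵀ)
  have hbudget : ((L - lm + 1 : ℕ) : ℝ) + ((lm + 1 : ℕ) : ℝ) = ((L + 2 : ℕ) : ℝ) := by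
    rw [← Nat.cast_add]; congr 1; omega
  calc ∑ b, frobNorm (K b - U b * (U b)ᵀ * K b * V b * (V b)ᵀ) ^ 2
      ≤ ∑ b, (frobNorm (K b - U b * (U b)ᵀ * K b) ^ 2 +
          frobNorm (K b - K b * V b * (V b)ᵀ) ^ 2) := Finset.sum_le_sum fun b _ => hblock b
    _ ≤ ((L - lm + 1 : ℕ) : ℝ) * ε ^ 2 * c + ((lm + 1 : ℕ) : ℝ) * ε ^ 2 * c := by
        rw [Finset.sum_add_distrib]; exact add_le_add hcol hrow
    _ = ((L + 2 : ℕ) : ℝ) * ε ^ 2 * c := by rw [← hbudget]; ring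

theorem hybrid_butterfly_error_bound {ι : Type*} [Fintype ι]
    (m n r s : ι → ℕ)
    (K : ∀ b, Matrix (Fin (m b)) (Fin (n b)) ℝ)
    (U : ∀ b, Matrix (Fin (m b)) (Fin (r b)) ℝ)
    (V : ∀ b, Matrix (Fin (n b)) (Fin (s b)) ℝ)
    (hU : ∀ b, (U b)ᵀ * U b = 1) (hV : ∀ b, (V b)ᵀ * V b = 1)
    (L lm : ℕ) (hlm : lm ≤ L) (ε c : ℝ) (hε : 0 ≤ ε) (hc : 0 ≤ c)
    (hcol : ∑ b, frobNorm (K b - U b * (U b)ᵀ * K b) ^ 2 ≤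
      ((L - lm + 1 : ℕ) : ℝ) * ε ^ 2 * c)
    (hrow : ∑ b, frobNorm (K b - K b * V b * (V b)ᵀ) ^ 2 ≤
      ((lm + 1 : ℕ) : ℝ) * ε ^ 2 * c) :
    ∑ b, frobNorm (K b - U b * (U b)ᵀ * K b * V b * (V b)ᵀ) ^ 2 ≤
      ((L + 2 : ℕ) : ℝ) * ε ^ 2 * c :=
  hybrid_butterfly_error_bound_general m n r s K U V hU L lm hlm ε c hcol hrow
end
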